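/- Let A be a commutative ring whose additive group is free abelian of rank r, and I an ideal whose additive group is also free abelian of rank r, such that I/I² is annihilated by d. Then for every positive integer n, the quotient group I^n/I^{n+1} is a finite group of order at most d^r. -/

import Mathlib

/-- The `n`-th graded piece `Iⁿ/Iⁿ⁺¹` of a ring `A` along an ideal `I`. -/
abbrev gradedPiece (A : Type) [CommRing A] (I : Ideal A) (n : ℕ) :=
  ↥(I ^ n) ⧸ (Submodule.comap (I ^ n).subtype (I ^ (n + 1)))

/-- If `A` is a commutative ring whose additive group is free abelian of rank `r`, and `I`
is an ideal whose additive group is also free abelian of rank `r`, with `I/I²` annihilated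
by `d`, then each `Iⁿ/Iⁿ⁺¹` (`n ≥ 1`) is finite of order at most `d^r`. -/
theorem card_graded_piece_le (A : Type) [CommRing A] [Module.Free ℤ A] [Module.Finite ℤ A]
    (r : ℕ) (hA : Module.finrank ℤ A = r)
    (I : Ideal A) (hI : Module.finrank ℤ ↥I = r)
    (d : ℕ) (hd : 0 < d) (h : ∀ x ∈ I, (d : A) * x ∈ I ^ 2) :
    ∀ n : ℕ, 0 < n →
      Finite (gradedPiece A I n) ∧ Nat.card (gradedPiece A I n) ≤ d ^ r := by
  haveI : NeZero d := ⟨hd.ne'⟩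
  intro n hn
  -- key: multiplication by d sends I^n into I^(n+1)
  have key : ∀ x ∈ I ^ n, (d : A) * x ∈ I ^ (n + 1) := by
    obtain ⟨m, rfl⟩ := Nat.exists_eq_succ_of_ne_zero hn.ne'
    intro x hx
    rw [pow_succ] at hx
    refine Submodule.mul_induction_on hx (fun a ha b hb => ?_) (fun x y hx hy => ?_)
    · have : a * ((d : A) * b) ∈ I ^ m * I ^ 2 := Ideal.mul_mem_mul ha (h b hb)
      rw [← pow_add] at this
      have e : (d : A) * (a * b) = a * ((d : A) * b) := by ring
      rw [e]
      exact this
    · rw [mul_add]; exact Ideal.add_mem _ hx hy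
  set N := Submodule.comap (I ^ n).subtype (I ^ (n + 1)) with hNdef
  have hdN : ∀ m : ↥(I ^ n), (d : ℤ) • m ∈ N := by
    intro m
    have : (((d : ℤ) • m : ↥(I ^ n)) : A) = (d : A) * (m : A) := by
      rw [Submodule.coe_smul_of_tower, zsmul_eq_mul, Int.cast_natCast]
    simp only [hNdef, Submodule.mem_comap, Submodule.coe_subtype, this]
    exact key (m : A) m.2
  haveI : IsNoetherian ℤ A := isNoetherian_of_isNoetherianRing_of_finite ℤ A
  haveI : Module.Finite ℤ ↥(I ^ n) :=
    Module.Finite.iff_fg.mpr (IsNoetherian.noetherian ((I ^ n).restrictScalars ℤ))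
  haveI : Module.Free ℤ ↥(I ^ n) := inferInstance
  set k := Module.finrank ℤ ↥(I ^ n) with hk
  have hkr : k ≤ r := by
    rw [← hA]
    exact Submodule.finrank_le ((I ^ n).restrictScalars ℤ)
  let b : Module.Basis (Fin k) ℤ ↥(I ^ n) := Module.finBasis ℤ ↥(I ^ n)
  let f : (Fin k → ℤ) →ₗ[ℤ] ↥(I ^ n) := (b.equivFun.symm : (Fin k → ℤ) ≃ₗ[ℤ] _)
  let g : (Fin k → ZMod d) → gradedPiece A I n :=
    fun v => Submodule.Quotient.mk (f (fun i => ((v i).val : ℤ)))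
  have hg : Function.Surjective g := by
    intro q
    obtain ⟨m, rfl⟩ := Submodule.Quotient.mk_surjective N q
    set c : Fin k → ℤ := b.equivFun m with hc
    refine ⟨fun i => ((c i : ZMod d)), ?_⟩
    have hdiv : ∀ i : Fin k, ∃ e : ℤ, (((c i : ZMod d)).val : ℤ) - c i = d * e := by
      intro i
      have : ((((((c i : ZMod d)).val : ℤ)) - c i : ℤ) : ZMod d) = 0 := by
        push_cast [ZMod.natCast_val, ZMod.intCast_cast]
        simp [ZMod.intCast_zmod_cast]
      exact (ZMod.intCast_zmod_eq_zero_iff_dvd _ _).mp this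
    choose e he using hdiv
    show Submodule.Quotient.mk _ = Submodule.Quotient.mk m
    rw [Submodule.Quotient.eq]
    have hm : m = f c := (b.equivFun.symm_apply_apply m).symm
    have : f (fun i => (((c i : ZMod d)).val : ℤ)) - m = (d : ℤ) • f e := by
      rw [hm, ← map_smul, ← map_sub]
      congr 1
      funext i
      simp only [Pi.sub_apply, Pi.smul_apply, smul_eq_mul]
      exact he i
    rw [this]
    exact hdN (f e)
  constructor
  · exact Finite.of_surjective g hg
  · calc Nat.card (gradedPiece A I n) ≤ Nat.card (Fin k → ZMod d) :=
          Nat.card_le_card_of_surjective g hg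
      _ = d ^ k := by simp [Nat.card_fun, Nat.card_eq_fintype_card, ZMod.card]
      _ ≤ d ^ r := Nat.pow_le_pow_right hd hkr
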